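/- arXiv:2605.09094 — 3 statements merged into one kernel-verified Lean document; each statement's English description precedes it below -/
import Mathlib

section
/- In the convex linear-scalarization setting (each f_s convex with L-Lipschitz gradient, D = {z : Az = b} nonempty with rank(A) = q, λ ∈ Δ_S^+, z* a minimizer of 𝓛_λ(z) = Σ_s λ_s f_s(z) over D), the iterates z_{t+1} = P_D(z_t − (1/L)∇𝓛_λ(z_t)) from z_0 ∈ D satisfy min_{v ∈ ℝ^q} ‖𝒦(z_T, v, λ)‖² ≤ (L² / T) ‖z_0 − z*‖² for every T ≥ 1, where 𝒦(z, v, λ) = (Σ_s λ_s ∇f_s(z) + Aᵀ v; Az − b) ∈ ℝ^{k+q}. -/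
/-!
Write `F = ∑ λ_s f_s`; it is convex with `L`-Lipschitz gradient `∑ λ_s ∇f_s`. Since `D = zs + V`
with `V = (span {a_i})ᗮ`, the projected step from `z ∈ D` is `z - L⁻¹ P_V ∇F z`, so the iteration is
plain gradient descent for `w ↦ F (zs + w)` on `V`, whose gradient is `P_V ∇F (zs + w)`.

For gradient descent with step `1/L` on a convex `L`-smooth function, the descent lemma gives
`F x_{t+1} ≤ F x_t - ‖∇F x_t‖² / (2L)`, cocoercivity of the gradient makes `‖∇F x_t‖`
nonincreasing, and `F x_0 - F x* ≤ L/2 ‖x_0 - x*‖²`; together `T ‖∇F x_T‖² ≤ L² ‖x_0 - x*‖²`.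
Finally `∇F z_T - P_V ∇F z_T ∈ span {a_i}` equals `-Aᵀ v` for some `v`, and `A z_T = b`, so for
this `v` the KKT residual is `‖P_V ∇F z_T‖²`.
-/

open scoped RealInnerProductSpace Gradient

theorem norm_le_of_sq_norm_le_inner {E : Type*} [NormedAddCommGroup E] [InnerProductSpace ℝ E]
    {u w : E} (h : ‖w‖ ^ 2 ≤ ⟪u, w⟫) : ‖w‖ ≤ ‖u‖ := by
  nlinarith [real_inner_le_norm u w, norm_nonneg u, norm_nonneg w]

section GradientDescent

variable {E : Type*} [NormedAddCommGroup E] [InnerProductSpace ℝ E] [CompleteSpace E]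
  {f : E → ℝ} {L : ℝ}

theorem hasDerivAt_apply_add_smul {x u : E} {t : ℝ} (hf : DifferentiableAt ℝ f (x + t • u)) :
    HasDerivAt (fun s : ℝ => f (x + s • u)) ⟪∇ f (x + t • u), u⟫ t := by
  have hline : HasDerivAt (fun s : ℝ => x + s • u) u t := by
    simpa using ((hasDerivAt_id t).smul_const u).const_add x
  have h := hf.hasGradientAt.hasFDerivAt.comp_hasDerivAt t hline
  rwa [InnerProductSpace.toDual_apply_apply] at h

theorem ConvexOn.add_inner_gradient_le (hconv : ConvexOn ℝ Set.univ f) {x : E}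
    (hf : DifferentiableAt ℝ f x) (y : E) : f x + ⟪∇ f x, y - x⟫ ≤ f y := by
  have hline : ConvexOn ℝ Set.univ fun t : ℝ => f (x + t • (y - x)) := by
    simpa [Function.comp_def, AffineMap.lineMap_apply_module', add_comm]
      using hconv.comp_affineMap (AffineMap.lineMap x y)
  have hslope := hline.le_slope_of_hasDerivAt (Set.mem_univ 0) (Set.mem_univ 1) one_pos
    (hasDerivAt_apply_add_smul (by rwa [zero_smul, add_zero]))
  simp only [slope_def_field, zero_smul, add_zero, one_smul, add_sub_cancel, sub_zero,
    div_one] at hslope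
  linarith

variable (hf : Differentiable ℝ f) (hL : ∀ x y, ‖∇ f x - ∇ f y‖ ≤ L * ‖x - y‖)
include hf hL

theorem apply_le_add_inner_gradient_add_sq (x y : E) :
    f y ≤ f x + ⟪∇ f x, y - x⟫ + L / 2 * ‖y - x‖ ^ 2 := by
  set u := y - x
  let ψ : ℝ → ℝ := fun t => f (x + t • u) - t * ⟪∇ f x, u⟫ - L / 2 * t ^ 2 * ‖u‖ ^ 2
  have hψ : ∀ t, HasDerivAt ψ (⟪∇ f (x + t • u) - ∇ f x, u⟫ - L * t * ‖u‖ ^ 2) t := by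
    intro t
    have := ((hasDerivAt_apply_add_smul (x := x) (u := u) (hf _)).sub
      ((hasDerivAt_id t).mul_const ⟪∇ f x, u⟫)).sub
      (((hasDerivAt_pow 2 t).const_mul (L / 2)).mul_const (‖u‖ ^ 2))
    refine this.congr_deriv ?_
    rw [inner_sub_left]
    ring
  have hanti : AntitoneOn ψ (Set.Icc 0 1) := by
    refine antitoneOn_of_deriv_nonpos (convex_Icc 0 1)
      (fun t _ => (hψ t).continuousAt.continuousWithinAt)
      (fun t _ => (hψ t).differentiableAt.differentiableWithinAt) fun t ht => ?_
    rw [interior_Icc] at ht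
    rw [(hψ t).deriv, sub_nonpos]
    calc ⟪∇ f (x + t • u) - ∇ f x, u⟫ ≤ ‖∇ f (x + t • u) - ∇ f x‖ * ‖u‖ := real_inner_le_norm _ _
      _ ≤ L * ‖t • u‖ * ‖u‖ := by gcongr; simpa using hL (x + t • u) x
      _ = L * t * ‖u‖ ^ 2 := by rw [norm_smul, Real.norm_of_nonneg ht.1.le]; ring
  have h01 := hanti (by simp) (by simp) zero_le_one
  simp only [ψ, u, one_smul, add_sub_cancel, zero_smul, add_zero, one_mul, one_pow, zero_mul,
    sub_zero, ne_eq, OfNat.ofNat_ne_zero, not_false_eq_true, zero_pow, mul_zero] at h01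
  linarith

theorem apply_sub_smul_gradient_le (hLpos : 0 < L) (x : E) :
    f (x - L⁻¹ • ∇ f x) ≤ f x - (2 * L)⁻¹ * ‖∇ f x‖ ^ 2 := by
  have h := apply_le_add_inner_gradient_add_sq hf hL x (x - L⁻¹ • ∇ f x)
  rw [sub_sub_cancel_left, inner_neg_right, real_inner_smul_right, real_inner_self_eq_norm_sq,
    norm_neg, norm_smul, Real.norm_of_nonneg (inv_nonneg.2 hLpos.le)] at h
  convert h using 1
  field_simp
  ring

theorem ConvexOn.add_inner_gradient_add_sq_le (hconv : ConvexOn ℝ Set.univ f) (hLpos : 0 < L)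
    (x y : E) : f x + ⟪∇ f x, y - x⟫ + (2 * L)⁻¹ * ‖∇ f y - ∇ f x‖ ^ 2 ≤ f y := by
  set d := ∇ f y - ∇ f x
  -- convexity at `x` and the descent lemma at `y`, both evaluated at `y - L⁻¹ • d`
  have hx := hconv.add_inner_gradient_le (hf x) (y - L⁻¹ • d)
  have hy := apply_le_add_inner_gradient_add_sq hf hL y (y - L⁻¹ • d)
  rw [sub_right_comm, inner_sub_right, real_inner_smul_right] at hx
  rw [sub_sub_cancel_left, inner_neg_right, real_inner_smul_right, norm_neg, norm_smul,
    Real.norm_of_nonneg (inv_nonneg.2 hLpos.le)] at hy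
  have hd : L⁻¹ * ⟪∇ f y, d⟫ - L⁻¹ * ⟪∇ f x, d⟫ = 2 * ((2 * L)⁻¹ * ‖d‖ ^ 2) := by
    rw [← mul_sub, ← inner_sub_left, real_inner_self_eq_norm_sq]; field_simp; ring
  have hL' : L / 2 * (L⁻¹ * ‖d‖) ^ 2 = (2 * L)⁻¹ * ‖d‖ ^ 2 := by field_simp
  linarith

theorem ConvexOn.inv_mul_norm_sq_sub_gradient_le_inner (hconv : ConvexOn ℝ Set.univ f)
    (hLpos : 0 < L) (x y : E) : L⁻¹ * ‖∇ f x - ∇ f y‖ ^ 2 ≤ ⟪∇ f x - ∇ f y, x - y⟫ := by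
  have hxy := hconv.add_inner_gradient_add_sq_le hf hL hLpos x y
  have hyx := hconv.add_inner_gradient_add_sq_le hf hL hLpos y x
  rw [norm_sub_rev] at hxy
  have hinner : ⟪∇ f x - ∇ f y, x - y⟫ = -⟪∇ f x, y - x⟫ - ⟪∇ f y, x - y⟫ := by
    simp only [inner_sub_left, inner_sub_right]; ring
  have hL' : L⁻¹ = (2 * L)⁻¹ + (2 * L)⁻¹ := by field_simp; ring
  rw [hinner, hL', add_mul]
  linarith

variable (hLpos : 0 < L) {x : ℕ → E} (hx : ∀ t, x (t + 1) = x t - L⁻¹ • ∇ f (x t))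
include hLpos hx

theorem ConvexOn.norm_gradient_succ_le (hconv : ConvexOn ℝ Set.univ f) (t : ℕ) :
    ‖∇ f (x (t + 1))‖ ≤ ‖∇ f (x t)‖ := by
  have hco := hconv.inv_mul_norm_sq_sub_gradient_le_inner hf hL hLpos (x (t + 1)) (x t)
  rw [hx t, sub_sub_cancel_left, ← hx t, inner_neg_right, real_inner_smul_right,
    ← mul_neg, mul_le_mul_iff_right₀ (inv_pos.2 hLpos), norm_sub_sq_real, inner_sub_left,
    real_inner_self_eq_norm_sq] at hco
  apply norm_le_of_sq_norm_le_inner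
  rw [real_inner_comm]
  linarith

theorem apply_add_sum_norm_sq_gradient_le (T : ℕ) :
    f (x T) + (2 * L)⁻¹ * ∑ t ∈ Finset.range T, ‖∇ f (x t)‖ ^ 2 ≤ f (x 0) := by
  induction T with
  | zero => simp
  | succ T ih =>
    have hstep := apply_sub_smul_gradient_le hf hL hLpos (x T)
    rw [← hx T] at hstep
    rw [Finset.sum_range_succ]
    linarith

theorem ConvexOn.mul_norm_sq_gradient_le (hconv : ConvexOn ℝ Set.univ f) {xs : E}
    (hmin : ∀ y, f xs ≤ f y) (T : ℕ) : T * ‖∇ f (x T)‖ ^ 2 ≤ L ^ 2 * ‖x 0 - xs‖ ^ 2 := by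
  have hcrit : ∇ f xs = 0 := by
    have hlocal : IsLocalMin f xs := Filter.Eventually.of_forall hmin
    exact (InnerProductSpace.toDual ℝ E).map_eq_zero_iff.1 <|
      hlocal.hasFDerivAt_eq_zero (hf xs).hasGradientAt.hasFDerivAt
  have hgap : f (x 0) - f xs ≤ L / 2 * ‖x 0 - xs‖ ^ 2 := by
    have := apply_le_add_inner_gradient_add_sq hf hL xs (x 0)
    rw [hcrit, inner_zero_left] at this
    linarith
  have hanti : Antitone fun t => ‖∇ f (x t)‖ :=
    antitone_nat_of_succ_le (hconv.norm_gradient_succ_le hf hL hLpos hx)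
  have hsum : ∑ t ∈ Finset.range T, ‖∇ f (x t)‖ ^ 2 ≤ 2 * L * (f (x 0) - f (x T)) := by
    rw [← inv_mul_le_iff₀ (by positivity)]
    linarith [apply_add_sum_norm_sq_gradient_le hf hL hLpos hx T]
  calc (T : ℝ) * ‖∇ f (x T)‖ ^ 2 = ∑ _t ∈ Finset.range T, ‖∇ f (x T)‖ ^ 2 := by simp
    _ ≤ ∑ t ∈ Finset.range T, ‖∇ f (x t)‖ ^ 2 :=
      Finset.sum_le_sum fun t ht => by gcongr; exact hanti (Finset.mem_range.1 ht).le
    _ ≤ 2 * L * (f (x 0) - f (x T)) := hsum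
    _ ≤ 2 * L * (L / 2 * ‖x 0 - xs‖ ^ 2) := by gcongr; linarith [hmin (x T)]
    _ = L ^ 2 * ‖x 0 - xs‖ ^ 2 := by ring

end GradientDescent

section AffineSubspace

variable {E : Type*} [NormedAddCommGroup E] [InnerProductSpace ℝ E] (V : Submodule ℝ E)
  {D : Set E} {zs : E} (hDV : ∀ z, z ∈ D ↔ z - zs ∈ V) {proj : E → E}
  (hproj : ∀ x, proj x ∈ D ∧ ∀ w ∈ D, ‖x - proj x‖ ≤ ‖x - w‖)
include hDV hproj

theorem proj_eq_of_sub_mem_orthogonal {x p : E} (hp : p ∈ D) (hxp : x - p ∈ Vᗮ) : proj x = p := by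
  have hpq : p - proj x ∈ V := by
    simpa using V.sub_mem ((hDV p).1 hp) ((hDV _).1 (hproj x).1)
  have hpyth : ‖x - proj x‖ ^ 2 = ‖x - p‖ ^ 2 + ‖p - proj x‖ ^ 2 := by
    rw [← sub_add_sub_cancel x p, norm_add_sq_real, V.inner_left_of_mem_orthogonal hpq hxp]
    ring
  have hle := (hproj x).2 p hp
  have : ‖p - proj x‖ = 0 := by nlinarith [norm_nonneg (x - proj x), norm_nonneg (p - proj x)]
  exact (sub_eq_zero.1 (norm_eq_zero.1 this)).symm

theorem proj_sub_smul_eq [V.HasOrthogonalProjection] {z : E} (hz : z ∈ D) (c : ℝ) (g : E) :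
    proj (z - c • g) = z - c • V.starProjection g := by
  refine proj_eq_of_sub_mem_orthogonal V hDV hproj ?_ ?_
  · rw [hDV, sub_right_comm]
    exact V.sub_mem ((hDV z).1 hz) (V.smul_mem c (V.starProjection_apply_mem g))
  · rw [sub_sub_sub_cancel_left, ← smul_sub]
    exact Vᗮ.smul_mem c (by simpa using Vᗮ.neg_mem (V.sub_starProjection_mem_orthogonal g))

omit hDV hproj

theorem HasGradientAt.comp_add_subtype [CompleteSpace E] [CompleteSpace V] {F : E → ℝ} {g z : E}
    {u : V} (h : HasGradientAt F g (z + u)) :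
    HasGradientAt (fun w : V => F (z + w)) (V.orthogonalProjectionOnto g) u := by
  rw [hasGradientAt_iff_hasFDerivAt] at h ⊢
  refine (h.comp u (V.subtypeL.hasFDerivAt.const_add z)).congr_fderiv ?_
  ext w
  simp

include hDV hproj

theorem ConvexOn.mul_norm_sq_starProjection_gradient_le [CompleteSpace E] [CompleteSpace V]
    {F : E → ℝ} {L : ℝ} (hF : Differentiable ℝ F) (hconv : ConvexOn ℝ Set.univ F)
    (hL : ∀ x y, ‖∇ F x - ∇ F y‖ ≤ L * ‖x - y‖) (hLpos : 0 < L) (hmin : ∀ z ∈ D, F zs ≤ F z)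
    {z : ℕ → E} (hz0 : z 0 ∈ D) (hz : ∀ t, z (t + 1) = proj (z t - L⁻¹ • ∇ F (z t))) (T : ℕ) :
    T * ‖V.starProjection (∇ F (z T))‖ ^ 2 ≤ L ^ 2 * ‖z 0 - zs‖ ^ 2 := by
  have hmem : ∀ t, z t ∈ D
    | 0 => hz0
    | t + 1 => hz t ▸ (hproj _).1
  let h : V → ℝ := fun w => F (zs + w)
  have hgrad : ∀ w, ∇ h w = V.orthogonalProjectionOnto (∇ F (zs + w)) := fun w =>
    ((hF _).hasGradientAt.comp_add_subtype V).gradient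
  have hdiff : Differentiable ℝ h := fun w =>
    ((hF _).hasGradientAt.comp_add_subtype V).differentiableAt
  have hconv_h : ConvexOn ℝ Set.univ h := by
    simpa [h, Function.comp_def] using (hconv.translate_right zs).comp_linearMap V.subtype
  have hL_h : ∀ w₁ w₂, ‖∇ h w₁ - ∇ h w₂‖ ≤ L * ‖w₁ - w₂‖ := fun w₁ w₂ => by
    rw [hgrad, hgrad, ← map_sub]
    refine (V.norm_orthogonalProjectionOnto_apply_le _).trans ?_
    simpa using hL (zs + w₁) (zs + w₂)
  let u : ℕ → V := fun t => ⟨z t - zs, (hDV _).1 (hmem t)⟩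
  have hzu : ∀ t, zs + (u t : E) = z t := fun t => add_sub_cancel zs (z t)
  have hu : ∀ t, u (t + 1) = u t - L⁻¹ • ∇ h (u t) := fun t => by
    ext
    simp only [u, hgrad, hz t, proj_sub_smul_eq V hDV hproj (hmem t), Submodule.coe_sub,
      Submodule.coe_smul, Submodule.starProjection_apply, hzu]
    abel
  have := hconv_h.mul_norm_sq_gradient_le hdiff hL_h hLpos hu (xs := 0)
    (fun w => by simpa [h] using hmin _ ((hDV _).2 (by simp))) T
  simpa [hgrad, hzu, u] using this

end AffineSubspace

section Scalarization

variable {E : Type*} [NormedAddCommGroup E] [InnerProductSpace ℝ E] {ι : Type*}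

theorem hasGradientAt_sum_mul [CompleteSpace E] (t : Finset ι) (c : ι → ℝ) {f : ι → E → ℝ}
    {g : ι → E} {x : E} (h : ∀ i ∈ t, HasGradientAt (f i) (g i) x) :
    HasGradientAt (fun y => ∑ i ∈ t, c i * f i y) (∑ i ∈ t, c i • g i) x := by
  simp_rw [hasGradientAt_iff_hasFDerivAt] at h ⊢
  refine (HasFDerivAt.fun_sum fun i hi => (h i hi).const_mul (c i)).congr_fderiv ?_
  simp [map_sum]

theorem convexOn_sum_mul {s : Set E} (hs : Convex ℝ s) (t : Finset ι) {c : ι → ℝ}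
    (hc : ∀ i ∈ t, 0 ≤ c i) {f : ι → E → ℝ} (hf : ∀ i ∈ t, ConvexOn ℝ s (f i)) :
    ConvexOn ℝ s fun y => ∑ i ∈ t, c i * f i y := by
  classical
  induction t using Finset.induction_on with
  | empty => simpa using convexOn_const (0 : ℝ) hs
  | insert i t hi ih =>
    simp only [Finset.sum_insert hi]
    exact ((hf i (t.mem_insert_self i)).smul (hc i (t.mem_insert_self i))).add
      (ih (fun j hj => hc j (Finset.mem_insert_of_mem hj))
        fun j hj => hf j (Finset.mem_insert_of_mem hj))

theorem norm_sum_smul_sub_sum_smul_le (t : Finset ι) {c : ι → ℝ} (hc : ∀ i ∈ t, 0 ≤ c i)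
    (hc₁ : ∑ i ∈ t, c i = 1) {g g' : ι → E} {C : ℝ} (h : ∀ i ∈ t, ‖g i - g' i‖ ≤ C) :
    ‖∑ i ∈ t, c i • g i - ∑ i ∈ t, c i • g' i‖ ≤ C := by
  rw [← Finset.sum_sub_distrib]
  calc ‖∑ i ∈ t, (c i • g i - c i • g' i)‖ ≤ ∑ i ∈ t, c i * ‖g i - g' i‖ := by
        refine (norm_sum_le _ _).trans (Finset.sum_le_sum fun i hi => ?_)
        rw [← smul_sub, norm_smul, Real.norm_of_nonneg (hc i hi)]
    _ ≤ ∑ i ∈ t, c i * C := Finset.sum_le_sum fun i hi => by gcongr; exacts [hc i hi, h i hi]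
    _ = C := by rw [← Finset.sum_mul, hc₁, one_mul]

theorem mem_orthogonal_span_range_iff (a : ι → E) (u : E) :
    u ∈ (Submodule.span ℝ (Set.range a))ᗮ ↔ ∀ i, ⟪a i, u⟫ = 0 := by
  rw [← Submodule.span_singleton_le_iff_mem, ← Submodule.isOrtho_iff_le, Submodule.isOrtho_comm,
    Submodule.isOrtho_span]
  simp

theorem iInf_kkt_residual_le [Fintype ι] [CompleteSpace E] (a : ι → E) (b : ι → ℝ) {z : E}
    (hz : ∀ i, ⟪a i, z⟫ = b i) (g : E) :
    ⨅ v : ι → ℝ, (‖g + ∑ i, v i • a i‖ ^ 2 + ∑ i, (⟪a i, z⟫ - b i) ^ 2)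
      ≤ ‖(Submodule.span ℝ (Set.range a))ᗮ.starProjection g‖ ^ 2 := by
  set K := Submodule.span ℝ (Set.range a)
  have : FiniteDimensional ℝ K := FiniteDimensional.span_of_finite ℝ (Set.finite_range a)
  have hspan : Kᗮ.starProjection g - g ∈ K := by
    rw [K.starProjection_orthogonal_val, sub_sub_cancel_left]
    exact K.neg_mem (K.starProjection_apply_mem g)
  obtain ⟨v, hv⟩ := (Submodule.mem_span_range_iff_exists_fun ℝ).1 hspan
  refine ciInf_le_of_le ⟨0, by rintro _ ⟨w, rfl⟩; positivity⟩ v ?_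
  simp [hv, hz, ← sub_eq_add_neg]

end Scalarization

theorem linear_scalarization_kkt_rate_general
    (k S q : ℕ)
    (f : Fin S → EuclideanSpace ℝ (Fin k) → ℝ)
    (hf : ∀ s, ContDiff ℝ 1 (f s))
    (hconv : ∀ s, ConvexOn ℝ Set.univ (f s))
    (L : ℝ) (hL : 0 < L)
    (hfL : ∀ s z₁ z₂, ‖gradient (f s) z₁ - gradient (f s) z₂‖ ≤ L * ‖z₁ - z₂‖)
    (a : Fin q → EuclideanSpace ℝ (Fin k)) (b : Fin q → ℝ)
    (D : Set (EuclideanSpace ℝ (Fin k)))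
    (hD : D = {z | ∀ i, ⟪a i, z⟫ = b i})
    (lam : Fin S → ℝ)
    (hlam_nonneg : ∀ s, 0 ≤ lam s) (hlam_sum : ∑ s, lam s = 1)
    (Lscal : EuclideanSpace ℝ (Fin k) → ℝ)
    (hLscal : ∀ z, Lscal z = ∑ s, lam s * f s z)
    (zs : EuclideanSpace ℝ (Fin k))
    (hzs : zs ∈ D ∧ ∀ z ∈ D, Lscal zs ≤ Lscal z)
    (proj : EuclideanSpace ℝ (Fin k) → EuclideanSpace ℝ (Fin k))
    (hproj : ∀ x, proj x ∈ D ∧ ∀ w ∈ D, ‖x - proj x‖ ≤ ‖x - w‖)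
    (z₀ : EuclideanSpace ℝ (Fin k)) (hz₀ : z₀ ∈ D)
    (zseq : ℕ → EuclideanSpace ℝ (Fin k))
    (hzseq0 : zseq 0 = z₀)
    (hzseq : ∀ t, zseq (t + 1) = proj (zseq t - (1 / L) • gradient Lscal (zseq t))) :
    ∀ T : ℕ, 1 ≤ T →
      (⨅ v : Fin q → ℝ,
          (‖∑ s, lam s • gradient (f s) (zseq T) + ∑ i, v i • a i‖ ^ 2
            + ∑ i, (⟪a i, zseq T⟫ - b i) ^ 2))
        ≤ (L ^ 2 / T) * ‖z₀ - zs‖ ^ 2 := by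
  intro T hT
  subst hD
  set V := (Submodule.span ℝ (Set.range a))ᗮ
  have hgrad : ∀ z, HasGradientAt Lscal (∑ s, lam s • ∇ (f s) z) z := fun z => by
    rw [funext hLscal]
    exact hasGradientAt_sum_mul _ _ fun s _ =>
      ((hf s).differentiable one_ne_zero z).hasGradientAt
  have hconvL : ConvexOn ℝ Set.univ Lscal := by
    rw [funext hLscal]
    exact convexOn_sum_mul convex_univ _ (fun s _ => hlam_nonneg s) fun s _ => hconv s
  have hLipL : ∀ x y, ‖∇ Lscal x - ∇ Lscal y‖ ≤ L * ‖x - y‖ := fun x y => by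
    rw [(hgrad x).gradient, (hgrad y).gradient]
    exact norm_sum_smul_sub_sum_smul_le _ (fun s _ => hlam_nonneg s) hlam_sum fun s _ => hfL s x y
  have hDV : ∀ z, z ∈ {z | ∀ i, ⟪a i, z⟫ = b i} ↔ z - zs ∈ V := fun z => by
    simp only [V, mem_orthogonal_span_range_iff, inner_sub_right, Set.mem_ofPred_eq, sub_eq_zero,
      hzs.1 _]
  have hrate := hconvL.mul_norm_sq_starProjection_gradient_le V hDV hproj
    (fun z => (hgrad z).differentiableAt) hLipL hL hzs.2 (hzseq0 ▸ hz₀)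
    (by simpa only [one_div] using hzseq) T
  rw [hzseq0, (hgrad _).gradient] at hrate
  have hzT : ∀ i, ⟪a i, zseq T⟫ = b i := by
    obtain ⟨n, rfl⟩ := Nat.exists_eq_add_of_le' hT
    exact hzseq n ▸ (hproj _).1
  calc _ ≤ ‖V.starProjection (∑ s, lam s • ∇ (f s) (zseq T))‖ ^ 2 :=
        iInf_kkt_residual_le a b hzT _
    _ ≤ L ^ 2 / T * ‖z₀ - zs‖ ^ 2 := by
      rw [div_mul_eq_mul_div, le_div_iff₀ (by exact_mod_cast hT)]
      linarith

/-- **KKT residual rate for the convex linear scalarization.** In the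
convex linear-scalarization setting, the projected gradient iterates satisfy
`min_{v ∈ ℝ^q} ‖𝒦(z_T, v, λ)‖² ≤ (L²/T) ‖z₀ − z*‖²` for every `T ≥ 1`, where
`𝒦(z, v, λ) = (Σ_s λ_s ∇f_s(z) + Aᵀ v; Az − b)` (the rows of `A` are the vectors `a i`,
so `Aᵀ v = Σ_i v_i a_i` and `(Az − b)_i = ⟪a i, z⟫ − b i`). -/
theorem linear_scalarization_kkt_rate
    (k S q : ℕ)
    (f : Fin S → EuclideanSpace ℝ (Fin k) → ℝ)
    (hf : ∀ s, ContDiff ℝ 1 (f s))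
    (hconv : ∀ s, ConvexOn ℝ Set.univ (f s))
    (L : ℝ) (hL : 0 < L)
    (hfL : ∀ s z₁ z₂, ‖gradient (f s) z₁ - gradient (f s) z₂‖ ≤ L * ‖z₁ - z₂‖)
    (a : Fin q → EuclideanSpace ℝ (Fin k)) (b : Fin q → ℝ)
    (hrank : LinearIndependent ℝ a)
    (D : Set (EuclideanSpace ℝ (Fin k)))
    (hD : D = {z | ∀ i, ⟪a i, z⟫ = b i})
    (hDne : D.Nonempty)
    (lam : Fin S → ℝ)
    (hlam_nonneg : ∀ s, 0 ≤ lam s) (hlam_sum : ∑ s, lam s = 1)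
    (Lscal : EuclideanSpace ℝ (Fin k) → ℝ)
    (hLscal : ∀ z, Lscal z = ∑ s, lam s * f s z)
    (zs : EuclideanSpace ℝ (Fin k))
    (hzs : zs ∈ D ∧ ∀ z ∈ D, Lscal zs ≤ Lscal z)
    (proj : EuclideanSpace ℝ (Fin k) → EuclideanSpace ℝ (Fin k))
    (hproj : ∀ x, proj x ∈ D ∧ ∀ w ∈ D, ‖x - proj x‖ ≤ ‖x - w‖)
    (z₀ : EuclideanSpace ℝ (Fin k)) (hz₀ : z₀ ∈ D)
    (zseq : ℕ → EuclideanSpace ℝ (Fin k))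
    (hzseq0 : zseq 0 = z₀)
    (hzseq : ∀ t, zseq (t + 1) = proj (zseq t - (1 / L) • gradient Lscal (zseq t))) :
    ∀ T : ℕ, 1 ≤ T →
      (⨅ v : Fin q → ℝ,
          (‖∑ s, lam s • gradient (f s) (zseq T) + ∑ i, v i • a i‖ ^ 2
            + ∑ i, (⟪a i, zseq T⟫ - b i) ^ 2))
        ≤ (L ^ 2 / T) * ‖z₀ - zs‖ ^ 2 :=
  linear_scalarization_kkt_rate_general k S q f hf hconv L hL hfL a b D hD lam hlam_nonneg hlam_sum
    Lscal hLscal zs hzs proj hproj z₀ hz₀ zseq hzseq0 hzseq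
end

section
/- Consider one step of the WC-Penalty iteration at θ_t = (ρ_t, z_t, δ_t) ∈ C with d_t = (θ_t − θ_{t+1})/η and components d_{t,ρ}, d_{t,z}, d_{t,δ}. Suppose ‖∇f_s(z)‖ ≤ M for all z and s ∈ [S], each λ_s ∈ (0, 1), and the minimum singular value of the Jacobian ∇h(z_t) is at least σ > 0. Then the constraint residual satisfies ‖h(z_t)‖ ≤ ((3√S · M + 1) ‖d_t‖ + M) / (u σ). -/
/-!
Write `a_s = v (λ_s f_s(z) + δ_s - ρ)`. The `z`-component of the direction is
`d_z = u ∇h(z)ᵀ h(z) + Σ_s a_s λ_s ∇f_s(z)`, so the singular-value bound gives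
`u σ ‖h(z)‖ ≤ ‖d_z‖ + M Σ_s |a_s|`. The projection onto `δ ≥ 0` makes `d_δ,s = a_s` whenever
`a_s < 0`, hence `|a_s| ≤ a_s + 2 |d_δ,s|`, while `Σ_s a_s = 1 - d_ρ`. Cauchy–Schwarz on
`Σ_s |d_δ,s|` then bounds `Σ_s |a_s|` by `1 + 3 √S ‖d‖`.
-/

lemma mul_sqrt_le_of_sq_mul_le {σ a b : ℝ} (hσ : 0 ≤ σ) (hb : 0 ≤ b)
    (h : σ ^ 2 * a ≤ b ^ 2) : σ * √a ≤ b := by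
  rwa [← Real.sqrt_sq hσ, ← Real.sqrt_mul (sq_nonneg σ), Real.sqrt_le_left hb]

lemma abs_le_add_two_mul_abs_min {a b : ℝ} (hb : 0 ≤ b) : |a| ≤ a + 2 * |min a b| := by
  rcases le_or_gt 0 a with ha | ha
  · rw [abs_of_nonneg ha]
    linarith [abs_nonneg (min a b)]
  · rw [min_eq_left (ha.le.trans hb), abs_of_neg ha]
    linarith

lemma Finset.sum_abs_le_sqrt_card_mul_sqrt_sum_sq {ι : Type*} (s : Finset ι) (x : ι → ℝ) :
    ∑ i ∈ s, |x i| ≤ √(s.card : ℝ) * √(∑ i ∈ s, x i ^ 2) := by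
  rw [← Real.sqrt_mul (Nat.cast_nonneg _), Real.le_sqrt (sum_nonneg fun i _ => abs_nonneg _)
    (by positivity)]
  simpa only [sq_abs] using sq_sum_le_card_mul_sum_sq (s := s) (f := fun i => |x i|)

lemma le_sqrt_sq_add_sq_add_sum_sq {ι E : Type*} [Fintype ι] [SeminormedAddCommGroup E]
    (x : ℝ) (y : E) (w : ι → ℝ) :
    |x| ≤ √(x ^ 2 + ‖y‖ ^ 2 + ∑ i, w i ^ 2) ∧ ‖y‖ ≤ √(x ^ 2 + ‖y‖ ^ 2 + ∑ i, w i ^ 2) ∧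
      √(∑ i, w i ^ 2) ≤ √(x ^ 2 + ‖y‖ ^ 2 + ∑ i, w i ^ 2) := by
  have hw : 0 ≤ ∑ i, w i ^ 2 := Finset.sum_nonneg fun i _ => sq_nonneg _
  refine ⟨Real.abs_le_sqrt ?_, (abs_norm y).ge.trans (Real.abs_le_sqrt ?_),
    Real.sqrt_le_sqrt ?_⟩ <;> linarith [sq_nonneg x, sq_nonneg ‖y‖]

lemma norm_sum_mul_smul_le {ι E : Type*} [Fintype ι] [SeminormedAddCommGroup E]
    [NormedSpace ℝ E] (a c : ι → ℝ) (g : ι → E) {M : ℝ} (hc : ∀ i, |c i| ≤ 1)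
    (hg : ∀ i, ‖g i‖ ≤ M) : ‖∑ i, (a i * c i) • g i‖ ≤ M * ∑ i, |a i| := by
  rw [Finset.mul_sum]
  refine (norm_sum_le _ _).trans (Finset.sum_le_sum fun i _ => ?_)
  rw [norm_smul, Real.norm_eq_abs, abs_mul]
  calc |a i| * |c i| * ‖g i‖ ≤ |a i| * 1 * M := by
        gcongr
        exacts [hc i, hg i]
    _ = M * |a i| := by ring

lemma sum_abs_le_one_add_three_sqrt_card_mul {S : ℕ} (a d : Fin S → ℝ) {D : ℝ}
    (had : ∀ s, |a s| ≤ a s + 2 * |d s|) (hsum : ∑ s, a s ≤ 1 + D)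
    (hd : √(∑ s, d s ^ 2) ≤ D) : ∑ s, |a s| ≤ 1 + 3 * √S * D := by
  have hD : 0 ≤ D := (Real.sqrt_nonneg _).trans hd
  rcases Nat.eq_zero_or_pos S with rfl | hS
  · simp
  have hD_le : D ≤ √S * D :=
    le_mul_of_one_le_left hD (Real.one_le_sqrt.mpr (by exact_mod_cast hS))
  have hcs : ∑ s, |d s| ≤ √S * D := by
    have := Finset.sum_abs_le_sqrt_card_mul_sqrt_sum_sq Finset.univ d
    rw [Finset.card_univ, Fintype.card_fin] at this
    exact this.trans (mul_le_mul_of_nonneg_left hd (Real.sqrt_nonneg _))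
  calc ∑ s, |a s| ≤ ∑ s, (a s + 2 * |d s|) := Finset.sum_le_sum fun s _ => had s
    _ = ∑ s, a s + 2 * ∑ s, |d s| := by rw [Finset.sum_add_distrib, Finset.mul_sum]
    _ ≤ 1 + 3 * √S * D := by linarith

theorem wcPenalty_constraint_residual_bound_general
    (k S q : ℕ)
    (f : Fin S → EuclideanSpace ℝ (Fin k) → ℝ)
    (h : Fin q → EuclideanSpace ℝ (Fin k) → ℝ)
    (M σ u v η : ℝ) (hM : 0 < M) (hσ : 0 < σ)
    (hu : 0 < u) (hη : 0 < η)
    (hgradf : ∀ (s : Fin S) (z' : EuclideanSpace ℝ (Fin k)), ‖gradient (f s) z'‖ ≤ M)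
    (lam : Fin S → ℝ) (hlam : ∀ s, 0 < lam s ∧ lam s < 1)
    -- the current iterate `θ_t = (ρ, z, δ) ∈ C`
    (ρ : ℝ) (z : EuclideanSpace ℝ (Fin k)) (δ : Fin S → ℝ) (hδ : ∀ s, 0 ≤ δ s)
    -- minimum singular value of `∇h(z_t)` is at least `σ`
    (hsing : ∀ w : Fin q → ℝ,
        σ ^ 2 * ∑ i, (w i) ^ 2 ≤ ‖∑ i, w i • gradient (h i) z‖ ^ 2)
    -- components of the update direction `d_t = (θ_t − θ_{t+1})/η`
    (dρ : ℝ) (dz : EuclideanSpace ℝ (Fin k)) (dδ : Fin S → ℝ)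
    (hdρ : dρ = 1 - v * ∑ s, (lam s * f s z + δ s - ρ))
    (hdz : dz = u • ∑ i, h i z • gradient (h i) z
        + v • ∑ s, ((lam s * f s z + δ s - ρ) * lam s) • gradient (f s) z)
    (hdδ : ∀ s, dδ s = min (v * (lam s * f s z + δ s - ρ)) (δ s / η))
    (dnorm : ℝ)
    (hdnorm : dnorm = Real.sqrt (dρ ^ 2 + ‖dz‖ ^ 2 + ∑ s, (dδ s) ^ 2)) :
    Real.sqrt (∑ i, (h i z) ^ 2)
      ≤ ((3 * Real.sqrt S * M + 1) * dnorm + M) / (u * σ) := by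
  set a : Fin S → ℝ := fun s => v * (lam s * f s z + δ s - ρ)
  set G := ∑ i, h i z • gradient (h i) z
  obtain ⟨hdρ_le, hdz_le, hdδ_le⟩ :
      |dρ| ≤ dnorm ∧ ‖dz‖ ≤ dnorm ∧ √(∑ s, dδ s ^ 2) ≤ dnorm :=
    hdnorm ▸ le_sqrt_sq_add_sq_add_sum_sq dρ dz dδ
  have hsum_a : ∑ s, a s ≤ 1 + dnorm := by
    have : ∑ s, a s = 1 - dρ := by simp only [a, hdρ, ← Finset.mul_sum]; ring
    linarith [neg_abs_le dρ]
  have habs_a : ∑ s, |a s| ≤ 1 + 3 * √S * dnorm :=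
    sum_abs_le_one_add_three_sqrt_card_mul a dδ
      (fun s => hdδ s ▸ abs_le_add_two_mul_abs_min (div_nonneg (hδ s) hη.le)) hsum_a hdδ_le
  have hf_part : ‖∑ s, (a s * lam s) • gradient (f s) z‖ ≤ M * ∑ s, |a s| :=
    norm_sum_mul_smul_le a lam _
      (fun s => abs_le.mpr ⟨by linarith [(hlam s).1], (hlam s).2.le⟩) (fun s => hgradf s z)
  have hdz_split : dz = u • G + ∑ s, (a s * lam s) • gradient (f s) z := by
    simp only [hdz, a, Finset.smul_sum, smul_smul, mul_assoc]
  have hσG : σ * √(∑ i, h i z ^ 2) ≤ ‖G‖ :=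
    mul_sqrt_le_of_sq_mul_le hσ.le (norm_nonneg _) (hsing fun i => h i z)
  rw [le_div_iff₀ (mul_pos hu hσ)]
  calc √(∑ i, h i z ^ 2) * (u * σ) = u * (σ * √(∑ i, h i z ^ 2)) := by ring
    _ ≤ u * ‖G‖ := mul_le_mul_of_nonneg_left hσG hu.le
    _ = ‖dz - ∑ s, (a s * lam s) • gradient (f s) z‖ := by
      rw [hdz_split, add_sub_cancel_right, norm_smul, Real.norm_of_nonneg hu.le]
    _ ≤ ‖dz‖ + M * ∑ s, |a s| := (norm_sub_le _ _).trans (add_le_add_right hf_part _)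
    _ ≤ dnorm + M * (1 + 3 * √S * dnorm) := by gcongr
    _ = (3 * √S * M + 1) * dnorm + M := by ring

/-- **one-step constraint residual bound for WC-Penalty.** Consider one
step of the WC-Penalty iteration at `θ_t = (ρ, z, δ) ∈ C`, with update direction
`d_t = (θ_t − θ_{t+1})/η` having components `dρ`, `dz`, `dδ`. If `‖∇f_s(z')‖ ≤ M` for all
`z'` and `s`, each `λ_s ∈ (0,1)`, and the minimum singular value of the Jacobian
`∇h(z)` at `z = z_t` is at least `σ > 0`, then
`‖h(z_t)‖ ≤ ((3√S·M + 1)‖d_t‖ + M)/(uσ)`. -/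
theorem wcPenalty_constraint_residual_bound
    (k S q : ℕ)
    (f : Fin S → EuclideanSpace ℝ (Fin k) → ℝ)
    (h : Fin q → EuclideanSpace ℝ (Fin k) → ℝ)
    (hf : ∀ s, ContDiff ℝ 1 (f s))
    (hh : ∀ i, ContDiff ℝ 1 (h i))
    (M σ u v η : ℝ) (hM : 0 < M) (hσ : 0 < σ)
    (hu : 0 < u) (hv : 0 < v) (hη : 0 < η)
    (hgradf : ∀ (s : Fin S) (z' : EuclideanSpace ℝ (Fin k)), ‖gradient (f s) z'‖ ≤ M)
    (lam : Fin S → ℝ) (hlam : ∀ s, 0 < lam s ∧ lam s < 1)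
    -- the current iterate `θ_t = (ρ, z, δ) ∈ C`
    (ρ : ℝ) (z : EuclideanSpace ℝ (Fin k)) (δ : Fin S → ℝ) (hδ : ∀ s, 0 ≤ δ s)
    -- minimum singular value of `∇h(z_t)` is at least `σ`
    (hsing : ∀ w : Fin q → ℝ,
        σ ^ 2 * ∑ i, (w i) ^ 2 ≤ ‖∑ i, w i • gradient (h i) z‖ ^ 2)
    -- components of the update direction `d_t = (θ_t − θ_{t+1})/η`
    (dρ : ℝ) (dz : EuclideanSpace ℝ (Fin k)) (dδ : Fin S → ℝ)
    (hdρ : dρ = 1 - v * ∑ s, (lam s * f s z + δ s - ρ))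
    (hdz : dz = u • ∑ i, h i z • gradient (h i) z
        + v • ∑ s, ((lam s * f s z + δ s - ρ) * lam s) • gradient (f s) z)
    (hdδ : ∀ s, dδ s = min (v * (lam s * f s z + δ s - ρ)) (δ s / η))
    (dnorm : ℝ)
    (hdnorm : dnorm = Real.sqrt (dρ ^ 2 + ‖dz‖ ^ 2 + ∑ s, (dδ s) ^ 2)) :
    Real.sqrt (∑ i, (h i z) ^ 2)
      ≤ ((3 * Real.sqrt S * M + 1) * dnorm + M) / (u * σ) :=
  wcPenalty_constraint_residual_bound_general k S q f h M σ u v η hM hσ hu hη hgradf lam hlam ρ z δ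
    hδ hsing dρ dz dδ hdρ hdz hdδ dnorm hdnorm
end

section
/- Consider the WC-Penalty iterates θ_t = (ρ_t, z_t, δ_t) with θ_0 ∈ C and ρ_0 ≥ 0. Suppose f_s(z) > 0 for all z and s ∈ [S], η ≤ 1, v S ≥ 1, and the step size satisfies η ≤ 1/L_P where L_P is the Lipschitz constant of ∇P. Then ρ_t ≥ −2 for all t ≥ 0. -/
/-
Only the `ρ`-coordinate of `∇P` matters: `∂P/∂ρ` depends on `ρ` with slope `v S`, so
Lipschitz continuity of `∇P` forces `v S ≤ L_P`, hence `η v S ≤ 1`. The update then reads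
`ρ' = (1 - η v S) ρ - η + η v Σ_s (λ_s f_s(z) + δ_s)`, and the last sum is nonnegative while
`δ ≥ 0` (which the projection maintains). So `ρ ≥ -1` implies
`ρ' ≥ -(1 - η v S) - η = -1 + η (v S - 1) ≥ -1`, and `ρ_t ≥ -1` for all `t`.
-/

open scoped RealInnerProductSpace

noncomputable section

/-- The `ρ`-component of `∇P(θ)` for the penalty
`P(θ) = ρ + (u/2) Σ_i h_i(z)² + (v/2) Σ_s (λ_s f_s(z) + δ_s − ρ)²`. -/
def gradPρ (k S q : ℕ)
    (f : Fin S → EuclideanSpace ℝ (Fin k) → ℝ)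
    (h : Fin q → EuclideanSpace ℝ (Fin k) → ℝ)
    (lam : Fin S → ℝ) (u v : ℝ)
    (θ : ℝ × EuclideanSpace ℝ (Fin k) × (Fin S → ℝ)) : ℝ :=
  1 - v * ∑ s, (lam s * f s θ.2.1 + θ.2.2 s - θ.1)

/-- The `z`-component of `∇P(θ)`. -/
def gradPz (k S q : ℕ)
    (f : Fin S → EuclideanSpace ℝ (Fin k) → ℝ)
    (h : Fin q → EuclideanSpace ℝ (Fin k) → ℝ)
    (lam : Fin S → ℝ) (u v : ℝ)
    (θ : ℝ × EuclideanSpace ℝ (Fin k) × (Fin S → ℝ)) : EuclideanSpace ℝ (Fin k) :=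
  u • ∑ i, h i θ.2.1 • gradient (h i) θ.2.1
    + v • ∑ s, ((lam s * f s θ.2.1 + θ.2.2 s - θ.1) * lam s) • gradient (f s) θ.2.1

/-- The `δ`-component of `∇P(θ)`. -/
def gradPδ (k S q : ℕ)
    (f : Fin S → EuclideanSpace ℝ (Fin k) → ℝ)
    (h : Fin q → EuclideanSpace ℝ (Fin k) → ℝ)
    (lam : Fin S → ℝ) (u v : ℝ)
    (θ : ℝ × EuclideanSpace ℝ (Fin k) × (Fin S → ℝ)) : Fin S → ℝ :=
  fun s => v * (lam s * f s θ.2.1 + θ.2.2 s - θ.1)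

/-- One step of the WC-Penalty iteration `θ ↦ P_C(θ − η ∇P(θ))`: the projection onto
`C = ℝ × ℝ^k × ℝ_+^S` leaves `(ρ, z)` unchanged and clips each `δ_s` at `0`. -/
def penStep (k S q : ℕ)
    (f : Fin S → EuclideanSpace ℝ (Fin k) → ℝ)
    (h : Fin q → EuclideanSpace ℝ (Fin k) → ℝ)
    (lam : Fin S → ℝ) (u v η : ℝ)
    (θ : ℝ × EuclideanSpace ℝ (Fin k) × (Fin S → ℝ)) :
    ℝ × EuclideanSpace ℝ (Fin k) × (Fin S → ℝ) :=
  ( θ.1 - η * gradPρ k S q f h lam u v θ,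
    θ.2.1 - η • gradPz k S q f h lam u v θ,
    fun s => max (θ.2.2 s - η * gradPδ k S q f h lam u v θ s) 0 )

section

variable {k S q : ℕ} {f : Fin S → EuclideanSpace ℝ (Fin k) → ℝ}
  {h : Fin q → EuclideanSpace ℝ (Fin k) → ℝ} {lam : Fin S → ℝ} {u v : ℝ}

theorem gradPρ_eq (θ : ℝ × EuclideanSpace ℝ (Fin k) × (Fin S → ℝ)) :
    gradPρ k S q f h lam u v θ
      = 1 - v * ∑ s, (lam s * f s θ.2.1 + θ.2.2 s) + v * S * θ.1 := by
  simp only [gradPρ, Finset.sum_sub_distrib, Finset.sum_const, Finset.card_univ,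
    Fintype.card_fin, nsmul_eq_mul]
  ring

theorem mul_card_le_of_gradP_lipschitz {LP : ℝ} (hLP : 0 ≤ LP)
    (hPLip : ∀ θ₁ θ₂ : ℝ × EuclideanSpace ℝ (Fin k) × (Fin S → ℝ),
        (gradPρ k S q f h lam u v θ₁ - gradPρ k S q f h lam u v θ₂) ^ 2
          + ‖gradPz k S q f h lam u v θ₁ - gradPz k S q f h lam u v θ₂‖ ^ 2
          + ∑ s, (gradPδ k S q f h lam u v θ₁ s - gradPδ k S q f h lam u v θ₂ s) ^ 2
        ≤ LP ^ 2 * ((θ₁.1 - θ₂.1) ^ 2 + ‖θ₁.2.1 - θ₂.2.1‖ ^ 2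
            + ∑ s, (θ₁.2.2 s - θ₂.2.2 s) ^ 2)) :
    v * S ≤ LP := by
  set θ₁ : ℝ × EuclideanSpace ℝ (Fin k) × (Fin S → ℝ) := (1, 0, 0)
  have hρ : gradPρ k S q f h lam u v θ₁ - gradPρ k S q f h lam u v 0 = v * S := by
    rw [gradPρ_eq, gradPρ_eq]
    simp [θ₁]
  have hLip := hPLip θ₁ 0
  have hz := sq_nonneg ‖gradPz k S q f h lam u v θ₁ - gradPz k S q f h lam u v 0‖
  have hδ : 0 ≤ ∑ s, (gradPδ k S q f h lam u v θ₁ s - gradPδ k S q f h lam u v 0 s) ^ 2 :=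
    Finset.sum_nonneg fun s _ => sq_nonneg _
  have hsq : (v * S) ^ 2 ≤ LP ^ 2 := by
    simp only [hρ, θ₁, Prod.fst_zero, Prod.snd_zero, sub_zero, norm_zero, Pi.zero_apply,
      one_pow, zero_pow two_ne_zero, add_zero, Finset.sum_const_zero, mul_one] at hLip
    linarith
  exact (le_abs_self _).trans (abs_le_of_sq_le_sq hsq hLP)

theorem neg_one_le_penStep_fst {η : ℝ} {θ : ℝ × EuclideanSpace ℝ (Fin k) × (Fin S → ℝ)}
    (hρ : -1 ≤ θ.1) (hterm : ∀ s, 0 ≤ lam s * f s θ.2.1 + θ.2.2 s) (hv : 0 ≤ v) (hη : 0 ≤ η)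
    (hvS : 1 ≤ v * S) (hηvS : η * (v * S) ≤ 1) :
    -1 ≤ (penStep k S q f h lam u v η θ).1 := by
  have hsum : 0 ≤ ∑ s, (lam s * f s θ.2.1 + θ.2.2 s) := Finset.sum_nonneg fun s _ => hterm s
  show -1 ≤ θ.1 - η * gradPρ k S q f h lam u v θ
  rw [gradPρ_eq]
  nlinarith [mul_nonneg (sub_nonneg.2 hηvS) (neg_le_iff_add_nonneg.1 hρ),
    mul_nonneg (mul_nonneg hη hv) hsum]

end

theorem wcPenalty_rho_lower_bound_general
    (k S q : ℕ)
    (f : Fin S → EuclideanSpace ℝ (Fin k) → ℝ)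
    (h : Fin q → EuclideanSpace ℝ (Fin k) → ℝ)
    (hfpos : ∀ s z, 0 < f s z)
    (lam : Fin S → ℝ) (hlam_pos : ∀ s, 0 < lam s)
    (u v η LP : ℝ) (hv : 0 < v) (hηpos : 0 < η) (hLP : 0 < LP)
    -- `∇P` is `L_P`-Lipschitz (Euclidean norm on `ℝ × ℝ^k × ℝ^S`)
    (hPLip : ∀ θ₁ θ₂ : ℝ × EuclideanSpace ℝ (Fin k) × (Fin S → ℝ),
        (gradPρ k S q f h lam u v θ₁ - gradPρ k S q f h lam u v θ₂) ^ 2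
          + ‖gradPz k S q f h lam u v θ₁ - gradPz k S q f h lam u v θ₂‖ ^ 2
          + ∑ s, (gradPδ k S q f h lam u v θ₁ s - gradPδ k S q f h lam u v θ₂ s) ^ 2
        ≤ LP ^ 2 * ((θ₁.1 - θ₂.1) ^ 2 + ‖θ₁.2.1 - θ₂.2.1‖ ^ 2
            + ∑ s, (θ₁.2.2 s - θ₂.2.2 s) ^ 2))
    (hvS : 1 ≤ v * S) (hηLP : η ≤ 1 / LP)
    -- iterates started at `θ₀ ∈ C` with `ρ₀ ≥ 0`
    (θ₀ : ℝ × EuclideanSpace ℝ (Fin k) × (Fin S → ℝ))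
    (hρ₀ : 0 ≤ θ₀.1) (hδ₀ : ∀ s, 0 ≤ θ₀.2.2 s)
    (θ : ℕ → ℝ × EuclideanSpace ℝ (Fin k) × (Fin S → ℝ))
    (hθ0 : θ 0 = θ₀)
    (hθstep : ∀ t, θ (t + 1) = penStep k S q f h lam u v η (θ t)) :
    ∀ t, -2 ≤ (θ t).1 := by
  have hηvS : η * (v * S) ≤ 1 :=
    calc η * (v * S) ≤ 1 / LP * LP :=
          mul_le_mul hηLP (mul_card_le_of_gradP_lipschitz hLP.le hPLip) (by positivity)
            (by positivity)
      _ = 1 := one_div_mul_cancel hLP.ne'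
  have hinv : ∀ t, -1 ≤ (θ t).1 ∧ ∀ s, 0 ≤ (θ t).2.2 s := by
    intro t
    induction t with
    | zero => exact hθ0 ▸ ⟨by linarith, hδ₀⟩
    | succ t ih =>
      rw [hθstep t]
      refine ⟨neg_one_le_penStep_fst ih.1 (fun s => ?_) hv.le hηpos.le hvS hηvS,
        fun s => le_max_right _ _⟩
      exact add_nonneg (mul_pos (hlam_pos s) (hfpos s _)).le (ih.2 s)
  exact fun t => by linarith [(hinv t).1]

/-- **lower bound on `ρ_t`.** For the WC-Penalty iterates started at
`θ₀ ∈ C` with `ρ₀ ≥ 0`, if the objectives are positive, `η ≤ 1`, `v S ≥ 1`, and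
`η ≤ 1/L_P` where `L_P` is the Lipschitz constant of `∇P`, then `ρ_t ≥ −2` for all `t`. -/
theorem wcPenalty_rho_lower_bound
    (k S q : ℕ)
    (f : Fin S → EuclideanSpace ℝ (Fin k) → ℝ)
    (h : Fin q → EuclideanSpace ℝ (Fin k) → ℝ)
    (hf : ∀ s, ContDiff ℝ 1 (f s))
    (hh : ∀ i, ContDiff ℝ 1 (h i))
    (hfpos : ∀ s z, 0 < f s z)
    (lam : Fin S → ℝ) (hlam_pos : ∀ s, 0 < lam s) (hlam_sum : ∑ s, lam s = 1)
    (u v η LP : ℝ) (hu : 0 < u) (hv : 0 < v) (hηpos : 0 < η) (hLP : 0 < LP)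
    -- `∇P` is `L_P`-Lipschitz (Euclidean norm on `ℝ × ℝ^k × ℝ^S`)
    (hPLip : ∀ θ₁ θ₂ : ℝ × EuclideanSpace ℝ (Fin k) × (Fin S → ℝ),
        (gradPρ k S q f h lam u v θ₁ - gradPρ k S q f h lam u v θ₂) ^ 2
          + ‖gradPz k S q f h lam u v θ₁ - gradPz k S q f h lam u v θ₂‖ ^ 2
          + ∑ s, (gradPδ k S q f h lam u v θ₁ s - gradPδ k S q f h lam u v θ₂ s) ^ 2
        ≤ LP ^ 2 * ((θ₁.1 - θ₂.1) ^ 2 + ‖θ₁.2.1 - θ₂.2.1‖ ^ 2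
            + ∑ s, (θ₁.2.2 s - θ₂.2.2 s) ^ 2))
    (hη1 : η ≤ 1) (hvS : 1 ≤ v * S) (hηLP : η ≤ 1 / LP)
    -- iterates started at `θ₀ ∈ C` with `ρ₀ ≥ 0`
    (θ₀ : ℝ × EuclideanSpace ℝ (Fin k) × (Fin S → ℝ))
    (hρ₀ : 0 ≤ θ₀.1) (hδ₀ : ∀ s, 0 ≤ θ₀.2.2 s)
    (θ : ℕ → ℝ × EuclideanSpace ℝ (Fin k) × (Fin S → ℝ))
    (hθ0 : θ 0 = θ₀)
    (hθstep : ∀ t, θ (t + 1) = penStep k S q f h lam u v η (θ t)) :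
    ∀ t, -2 ≤ (θ t).1 :=
  wcPenalty_rho_lower_bound_general k S q f h hfpos lam hlam_pos u v η LP hv hηpos hLP hPLip hvS
    hηLP θ₀ hρ₀ hδ₀ θ hθ0 hθstep

end
end
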